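/- Let f : ℝⁿ → ℝⁿ be Lipschitz with constant L ≥ 0, A : ℝⁿ → ℝⁿ a continuous linear map with operator norm ‖A‖, M > 0, and let p : ℝ → ℝ be measurable with |p(t)| ≤ M for t ∈ [0,T], and p* ∈ ℝ. Suppose x, y : ℝ → ℝⁿ satisfy x′(t) = f(x(t)) + p(t)·A x(t) and y′(t) = f(y(t)) + p*·A y(t) for all t ∈ [0,T]. Then for every t ∈ [0,T], ‖x(t) − y(t)‖ ≤ e^{(L + M‖A‖)t} · ( ‖x(0) − y(0)‖ + ‖A‖ · ∫₀^t |p(s) − p*|·‖y(s)‖ ds ). -/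

import Mathlib

open MeasureTheory Set Topology

/-!
With `z = x - y` one has `z' = (f x - f y) + p • A z + (p - p*) • A y`, so
`‖z'‖ ≤ K ‖z‖ + ‖A‖ |p - p*| ‖y‖` with `K = L + M ‖A‖`. Integrating from `0` to `s ≤ t` gives
`‖z s‖ ≤ c + K ∫₀ˢ ‖z‖` with `c = ‖z 0‖ + ‖A‖ ∫₀ᵗ |p - p*| ‖y‖`, and the integral form of
Grönwall's inequality turns this into `‖z t‖ ≤ c e^{K t}`.
-/

theorem add_mul_gronwallBound_zero (c K x : ℝ) :
    c + K * gronwallBound 0 K c x = c * Real.exp (K * x) := by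
  rcases eq_or_ne K 0 with rfl | hK
  · simp
  · rw [gronwallBound_of_K_ne_0 hK]
    field_simp
    ring

theorem le_mul_exp_of_le_add_mul_integral {v : ℝ → ℝ} {a b c K : ℝ} (hab : a ≤ b) (hK : 0 ≤ K)
    (hv : ContinuousOn v (Icc a b)) (hle : ∀ t ∈ Icc a b, v t ≤ c + K * ∫ s in a..t, v s) :
    v b ≤ c * Real.exp (K * (b - a)) := by
  -- `W = ∫ v` satisfies the differential inequality `W' ≤ K W + c`, with `W a = 0`.
  set W : ℝ → ℝ := fun t => ∫ s in a..t, v s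
  have hvI : IntervalIntegrable v volume a b := hv.intervalIntegrable_of_Icc hab
  have hWcont : ContinuousOn W (Icc a b) := by
    simpa only [uIcc_of_le hab] using
      intervalIntegral.continuousOn_primitive_interval' hvI left_mem_uIcc
  have hWderiv : ∀ t ∈ Ico a b, HasDerivWithinAt W (v t) (Ici t) t := by
    intro t ht
    have hnhds : Icc a b ∈ 𝓝[>] t := Icc_mem_nhdsGT_of_mem ht
    exact intervalIntegral.integral_hasDerivWithinAt_right
      (hvI.mono_set (by rw [uIcc_of_le hab, uIcc_of_le ht.1]; exact Icc_subset_Icc_right ht.2.le))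
      ⟨Icc a b, hnhds, hv.aestronglyMeasurable measurableSet_Icc⟩
      ((hv t (Ico_subset_Icc_self ht)).mono_of_mem_nhdsWithin hnhds)
  have hWbound : W b ≤ gronwallBound 0 K c (b - a) :=
    le_gronwallBound_of_liminf_deriv_right_le hWcont
      (fun t ht _ hr => (hWderiv t ht).liminf_right_slope_le hr) (by simp [W])
      (fun t ht => by linarith [hle t (Ico_subset_Icc_self ht)]) b (right_mem_Icc.2 hab)
  calc v b ≤ c + K * W b := hle b (right_mem_Icc.2 hab)
    _ ≤ c + K * gronwallBound 0 K c (b - a) := by gcongr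
    _ = c * Real.exp (K * (b - a)) := add_mul_gronwallBound_zero c K (b - a)

variable {E : Type*} [NormedAddCommGroup E] [NormedSpace ℝ E]

theorem LipschitzWith.norm_add_smul_sub_add_smul_le {f : E → E} {L : NNReal}
    (hf : LipschitzWith L f) (A : E →L[ℝ] E) {q M : ℝ} (hq : |q| ≤ M) (q' : ℝ) (u w : E) :
    ‖(f u + q • A u) - (f w + q' • A w)‖ ≤ (L + M * ‖A‖) * ‖u - w‖ + ‖A‖ * (|q - q'| * ‖w‖) := by
  have hM : 0 ≤ M := (abs_nonneg q).trans hq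
  have hsplit : (f u + q • A u) - (f w + q' • A w) =
      (f u - f w) + q • A (u - w) + (q - q') • A w := by
    rw [map_sub, smul_sub, sub_smul]; abel
  have hA : ‖q • A (u - w)‖ ≤ M * ‖A‖ * ‖u - w‖ := by
    rw [norm_smul, Real.norm_eq_abs, mul_assoc]
    exact mul_le_mul hq (A.le_opNorm _) (norm_nonneg _) hM
  have hA' : ‖(q - q') • A w‖ ≤ ‖A‖ * (|q - q'| * ‖w‖) := by
    rw [norm_smul, Real.norm_eq_abs, mul_left_comm]
    exact mul_le_mul_of_nonneg_left (A.le_opNorm w) (abs_nonneg _)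
  rw [hsplit]
  refine (norm_add₃_le ..).trans ?_
  linarith [hf.norm_sub_le u w]

variable [CompleteSpace E]

/-- A derivative is always measurable, so an integrable bound makes it integrable. -/
theorem integrableOn_of_hasDerivAt_of_norm_le {z z' : ℝ → E} {g : ℝ → ℝ} {s : Set ℝ}
    (hs : MeasurableSet s) (hz : ∀ t ∈ s, HasDerivAt z (z' t) t) (hg : IntegrableOn g s)
    (hbound : ∀ t ∈ s, ‖z' t‖ ≤ g t) : IntegrableOn z' s := by
  have hmeas : AEStronglyMeasurable z' (volume.restrict s) :=
    (aestronglyMeasurable_deriv z _).congr <|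
      (ae_restrict_iff' hs).2 <| .of_forall fun t ht => (hz t ht).deriv
  exact hg.mono' hmeas ((ae_restrict_iff' hs).2 (.of_forall hbound))

theorem norm_le_exp_mul_of_norm_deriv_le {z z' : ℝ → E} {h : ℝ → ℝ}
    {a b K : ℝ} (hab : a ≤ b) (hK : 0 ≤ K) (hz : ∀ t ∈ Icc a b, HasDerivAt z (z' t) t)
    (hh : IntegrableOn h (Icc a b)) (hh0 : ∀ t ∈ Icc a b, 0 ≤ h t)
    (hbound : ∀ t ∈ Icc a b, ‖z' t‖ ≤ K * ‖z t‖ + h t) :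
    ‖z b‖ ≤ Real.exp (K * (b - a)) * (‖z a‖ + ∫ s in a..b, h s) := by
  have hzc : ContinuousOn z (Icc a b) := fun t ht => (hz t ht).continuousAt.continuousWithinAt
  have hnorm : IntegrableOn (fun t => ‖z t‖) (Icc a b) := hzc.norm.integrableOn_Icc
  have hKnorm : IntegrableOn (fun t => K * ‖z t‖) (Icc a b) := hnorm.const_mul K
  have hg : IntegrableOn (fun t => K * ‖z t‖ + h t) (Icc a b) := hKnorm.add hh
  have hz' := integrableOn_of_hasDerivAt_of_norm_le measurableSet_Icc hz hg hbound
  rw [mul_comm]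
  refine le_mul_exp_of_le_add_mul_integral hab hK hzc.norm fun t ht => ?_
  have hIcc : Icc a t ⊆ Icc a b := Icc_subset_Icc_right ht.2
  have hsub : uIcc a t ⊆ Icc a b := (uIcc_of_le ht.1).trans_subset hIcc
  have hftc : ∫ s in a..t, z' s = z t - z a :=
    intervalIntegral.integral_eq_sub_of_hasDerivAt (fun s hs => hz s (hsub hs))
      ((hz'.mono_set hsub).intervalIntegrable)
  have hh_mono : ∫ s in a..t, h s ≤ ∫ s in a..b, h s :=
    intervalIntegral.integral_mono_interval le_rfl ht.1 ht.2
      (ae_restrict_of_forall_mem measurableSet_Ioc fun s hs => hh0 s (Ioc_subset_Icc_self hs))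
      (hh.mono_set (uIcc_of_le hab).subset).intervalIntegrable
  calc ‖z t‖ ≤ ‖z a‖ + ‖z t - z a‖ := norm_le_norm_add_norm_sub' _ _
    _ ≤ ‖z a‖ + ∫ s in a..t, (K * ‖z s‖ + h s) := by
        rw [← hftc]
        gcongr
        exact intervalIntegral.norm_integral_le_of_norm_le ht.1
          (.of_forall fun s hs => hbound s (hIcc (Ioc_subset_Icc_self hs)))
          ((hg.mono_set hsub).intervalIntegrable)
    _ = ‖z a‖ + (∫ s in a..t, h s) + K * ∫ s in a..t, ‖z s‖ := by
        rw [intervalIntegral.integral_add (hKnorm.mono_set hsub).intervalIntegrable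
          (hh.mono_set hsub).intervalIntegrable, intervalIntegral.integral_const_mul]
        ring
    _ ≤ (‖z a‖ + ∫ s in a..b, h s) + K * ∫ s in a..t, ‖z s‖ := by gcongr

theorem ps_gronwall_estimate_general
    {n : ℕ} (f : EuclideanSpace ℝ (Fin n) → EuclideanSpace ℝ (Fin n))
    (L : ℝ) (hL : 0 ≤ L) (hf : LipschitzWith L.toNNReal f)
    (A : EuclideanSpace ℝ (Fin n) →L[ℝ] EuclideanSpace ℝ (Fin n))
    (M T : ℝ) (hM : 0 < M)
    (p : ℝ → ℝ) (hmeas : Measurable p) (hbd : ∀ t ∈ Set.Icc (0 : ℝ) T, |p t| ≤ M)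
    (pstar : ℝ) (x y : ℝ → EuclideanSpace ℝ (Fin n))
    (hx : ∀ t ∈ Set.Icc (0 : ℝ) T, HasDerivAt x (f (x t) + p t • A (x t)) t)
    (hy : ∀ t ∈ Set.Icc (0 : ℝ) T, HasDerivAt y (f (y t) + pstar • A (y t)) t) :
    ∀ t ∈ Set.Icc (0 : ℝ) T,
      ‖x t - y t‖ ≤ Real.exp ((L + M * ‖A‖) * t) *
        (‖x 0 - y 0‖ + ‖A‖ * ∫ s in (0 : ℝ)..t, |p s - pstar| * ‖y s‖) := by
  intro t ht
  have hsub : Icc 0 t ⊆ Icc 0 T := Icc_subset_Icc_right ht.2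
  have hyc : ContinuousOn y (Icc 0 t) := fun s hs =>
    (hy s (hsub hs)).continuousAt.continuousWithinAt
  have hdev : IntegrableOn (fun s => |p s - pstar|) (Icc 0 t) :=
    Measure.integrableOn_of_bounded (M := M + |pstar|) measure_Icc_lt_top.ne
      (hmeas.sub measurable_const).abs.aestronglyMeasurable
      (ae_restrict_of_forall_mem measurableSet_Icc fun s hs => by
        rw [Real.norm_eq_abs, abs_abs]
        exact (abs_sub _ _).trans (add_le_add_left (hbd s (hsub hs)) _))
  have key := norm_le_exp_mul_of_norm_deriv_le ht.1 (by positivity)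
    (fun s hs => (hx s (hsub hs)).sub (hy s (hsub hs)))
    ((hdev.mul_continuousOn hyc.norm isCompact_Icc).const_mul ‖A‖) (fun s _ => by positivity)
    (fun s hs => Real.coe_toNNReal L hL ▸
      hf.norm_add_smul_sub_add_smul_le A (hbd s (hsub hs)) pstar (x s) (y s))
  simpa only [Pi.sub_apply, sub_zero, intervalIntegral.integral_const_mul] using key

/-- Grönwall-type estimate comparing a solution of the switched system
`x′ = f(x) + p(t)·A x` with a solution of the averaged system `y′ = f(y) + p*·A y`:
`‖x(t) − y(t)‖ ≤ e^{(L + M‖A‖)t} (‖x(0) − y(0)‖ + ‖A‖ ∫₀ᵗ |p(s) − p*| ‖y(s)‖ ds)`. -/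
theorem ps_gronwall_estimate
    {n : ℕ} (f : EuclideanSpace ℝ (Fin n) → EuclideanSpace ℝ (Fin n))
    (L : ℝ) (hL : 0 ≤ L) (hf : LipschitzWith L.toNNReal f)
    (A : EuclideanSpace ℝ (Fin n) →L[ℝ] EuclideanSpace ℝ (Fin n))
    (M T : ℝ) (hM : 0 < M) (hT : 0 < T)
    (p : ℝ → ℝ) (hmeas : Measurable p) (hbd : ∀ t ∈ Set.Icc (0 : ℝ) T, |p t| ≤ M)
    (pstar : ℝ) (x y : ℝ → EuclideanSpace ℝ (Fin n))
    (hx : ∀ t ∈ Set.Icc (0 : ℝ) T, HasDerivAt x (f (x t) + p t • A (x t)) t)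
    (hy : ∀ t ∈ Set.Icc (0 : ℝ) T, HasDerivAt y (f (y t) + pstar • A (y t)) t) :
    ∀ t ∈ Set.Icc (0 : ℝ) T,
      ‖x t - y t‖ ≤ Real.exp ((L + M * ‖A‖) * t) *
        (‖x 0 - y 0‖ + ‖A‖ * ∫ s in (0 : ℝ)..t, |p s - pstar| * ‖y s‖) :=
  ps_gronwall_estimate_general f L hL hf A M T hM p hmeas hbd pstar x y hx hy
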